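/- arXiv:2507.12792 — 4 statements merged into one kernel-verified Lean document; each statement's English description precedes it below -/
import Mathlib

section
/- Log Matching Property: if two logs agree on an appended command (same command, same slot s, same view) and both satisfy the property that each command records the unique command it was appended after (unique-predecessor property from Claim 10), then the two logs are identical on all slots up to s. -/
/-- Log Matching Property: if each appended command uniquely determines its
predecessor (as a function `pred` of the slot and command, the same for all
logs), and two logs contain the same command at slot `s`, then they agree on
all slots up to `s`. -/
theorem log_matching {Cmd : Type*}
    (l l' : ℕ → Option Cmd) (pred : ℕ → Cmd → Cmd)
    (hl : ∀ t c, l (t + 1) = some c → l t = some (pred (t + 1) c))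
    (hl' : ∀ t c, l' (t + 1) = some c → l' t = some (pred (t + 1) c))
    (s : ℕ) (c : Cmd) (hs : l s = some c) (hs' : l' s = some c) :
    ∀ t ≤ s, l t = l' t := by
  have key : ∀ d, ∃ c0, l (s - d) = some c0 ∧ l' (s - d) = some c0 := by
    intro d
    induction d with
    | zero => exact ⟨c, hs, hs'⟩
    | succ d ih =>
      rcases ih with ⟨c0, h1, h2⟩
      rcases Nat.lt_or_ge d s with hd | hd
      · have heq : s - d = (s - (d + 1)) + 1 := by omega
        rw [heq] at h1 h2
        exact ⟨pred (s - (d + 1) + 1) c0, hl _ _ h1, hl' _ _ h2⟩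
      · have heq : s - (d + 1) = s - d := by omega
        rw [heq]
        exact ⟨c0, h1, h2⟩
  intro t ht
  rcases key (s - t) with ⟨c0, h1, h2⟩
  have : s - (s - t) = t := by omega
  rw [this] at h1 h2
  rw [h1, h2]
end

section
/- Monotonicity of views in a log: in any log where every appended command at slot s' > 1 was (in some log) appended in its own view immediately after the command at slot s'−1 (Claim 6), the view numbers of appended commands are nondecreasing in the slot index: if s < s' ≤ last-append then view(log(s)) ≤ view(log(s')). -/
/-- Monotonicity of views in a log: if each appended command's own view is the
view in which it was appended (`addedView`), commands carry views no larger
than the view in which they were added, and a command can only be appended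
after its predecessor was appended, then views are nondecreasing in the slot
index up to `lastAppend`. -/
theorem log_views_monotone {Cmd : Type*}
    (log : ℕ → Cmd) (view : Cmd → ℕ) (lastAppend : ℕ) (addedView : ℕ → ℕ)
    (hle : ∀ s ≤ lastAppend, view (log s) ≤ addedView s)
    (hown : ∀ s, 1 ≤ s → s ≤ lastAppend → addedView s = view (log s))
    (hpres : ∀ s, 2 ≤ s → s ≤ lastAppend → addedView (s - 1) ≤ addedView s) :
    ∀ s s', 1 ≤ s → s < s' → s' ≤ lastAppend → view (log s) ≤ view (log s') := by
  have key : ∀ s', ∀ s, 1 ≤ s → s ≤ s' → s' ≤ lastAppend → addedView s ≤ addedView s' := by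
    intro s'
    induction s' with
    | zero => intro s h1 h2 _; omega
    | succ n ih =>
      intro s h1 h2 h3
      rcases Nat.lt_or_ge s (n + 1) with h | h
      · have hn : addedView n ≤ addedView (n + 1) := by
          have := hpres (n + 1) (by omega) h3
          simpa using this
        exact le_trans (ih s h1 (by omega) (by omega)) hn
      · have : s = n + 1 := by omega
        subst this; rfl
  intro s s' h1 hlt h3
  calc view (log s) ≤ addedView s := hle s (by omega)
    _ ≤ addedView s' := key s' s h1 (by omega) h3
    _ = view (log s') := hown s' (by omega) h3
end

section
/- Uniqueness of proposals per slot per view: if in each view at most one initiator exists, each initiator issues at most one view-init command per view, and each replica proposes at most one command per (slot, view) pair following the slot assignment of the unique view-init, then for any slot s and view v at most one command is ever proposed for s in v. -/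
/-- Uniqueness of proposals per slot per view: if each replica proposes at most
one command per (slot, view), and each slot of each view is assigned (by the
unique view-init of that view) to exactly one replica `assign v s`, with
replicas only proposing for their assigned slots, then at most one command is
ever proposed for a slot `s` in a view `v`. -/
theorem unique_proposal_per_slot_view {Rep Cmd : Type*}
    (Propose : Rep → Cmd → ℕ → ℕ → Prop)
    (assign : ℕ → ℕ → Rep)
    (fact1 : ∀ r c c' s v, Propose r c s v → Propose r c' s v → c = c')
    (honly_assigned : ∀ r c s v, Propose r c s v → r = assign v s)
    (s v : ℕ) (r r' : Rep) (c c' : Cmd)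
    (h : Propose r c s v) (h' : Propose r' c' s v) :
    c = c' := by
  have e := (honly_assigned r c s v h).trans (honly_assigned r' c' s v h').symm
  subst e
  exact fact1 r c c' s v h h'
end

section
/- First command of a view is its view-init: in any log where (a) a replica appends non-init commands of view v only after v's view-init is appended, and (b) commands of the current view are never removed, the smallest appended slot s with view(log(s)) = v contains the view-init command of v. -/
/-- First command of a view is its view-init: if non-init commands of view `v`
can only be appended after `init v` is appended at a smaller slot with view
`v`, then the smallest appended slot holding a command of view `v` holds
`init v`. -/
theorem first_command_is_view_init {Cmd : Type*}
    (log : ℕ → Option Cmd) (view : Cmd → ℕ) (init : ℕ → Cmd) (v : ℕ)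
    (hinit_view : view (init v) = v)
    (ha : ∀ s c, log s = some c → view c = v → c ≠ init v →
      ∃ t < s, log t = some (init v))
    (s : ℕ) (c : Cmd) (hs : log s = some c) (hv : view c = v)
    (hmin : ∀ t < s, ∀ c', log t = some c' → view c' ≠ v) :
    c = init v := by
  by_contra hne
  obtain ⟨t, ht, hlt⟩ := ha s c hs hv hne
  exact hmin t ht _ hlt hinit_view
end
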